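/- Let k ≥ 2 and let G be a thin spider: a graph with vertices c_1,…,c_k forming a clique and s_1,…,s_k forming an independent set, where s_i is adjacent to c_j if and only if i = j, possibly together with one additional vertex c_0 adjacent to all of c_1,…,c_k and to none of s_1,…,s_k. Then b*(G) = ω(G). -/

import Mathlib

variable {V : Type*} {W : Type*}

/-- A proper coloring of `G` using colors `{1, …, k}`: colors lie in `{1,…,k}`,
adjacent vertices get different colors, and every color in `{1,…,k}` is used. -/
def IsProperKColoring (G : SimpleGraph V) (k : ℕ) (c : V → ℕ) : Prop :=
  (∀ v, c v ∈ Set.Icc 1 k) ∧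
  (∀ u v, G.Adj u v → c u ≠ c v) ∧
  (∀ j ∈ Set.Icc 1 k, ∃ v, c v = j)

/-- `u` is a b-vertex: every color `j ∈ {1,…,k}` with `j ≠ c u` appears on a neighbor of `u`. -/
def IsBVertex (G : SimpleGraph V) (k : ℕ) (c : V → ℕ) (u : V) : Prop :=
  ∀ j ∈ Set.Icc 1 k, j ≠ c u → ∃ w, G.Adj u w ∧ c w = j

/-- `u` is a nice vertex: it is a b-vertex and for every color `j ≠ c u` in `{1,…,k}`
it has a b-vertex neighbor of color `j`. -/
def IsNiceVertex (G : SimpleGraph V) (k : ℕ) (c : V → ℕ) (u : V) : Prop :=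
  IsBVertex G k c u ∧
  ∀ j ∈ Set.Icc 1 k, j ≠ c u → ∃ w, G.Adj u w ∧ c w = j ∧ IsBVertex G k c w

/-- A Grundy coloring using `k` colors: proper, and every vertex of color `j` has a
neighbor of each smaller color `i ≥ 1`. -/
def IsGrundyColoring (G : SimpleGraph V) (k : ℕ) (c : V → ℕ) : Prop :=
  IsProperKColoring G k c ∧
  ∀ i j : ℕ, 1 ≤ i → i < j → j ≤ k → ∀ v, c v = j → ∃ w, G.Adj v w ∧ c w = i

/-- A z-coloring: a Grundy coloring with a nice vertex of (top) color `k`. -/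
def IsZColoring (G : SimpleGraph V) (k : ℕ) (c : V → ℕ) : Prop :=
  IsGrundyColoring G k c ∧ ∃ u, c u = k ∧ IsNiceVertex G k c u

/-- A b*-coloring: a proper coloring with a nice vertex of (top) color `k`. -/
def IsBStarColoring (G : SimpleGraph V) (k : ℕ) (c : V → ℕ) : Prop :=
  IsProperKColoring G k c ∧ ∃ u, c u = k ∧ IsNiceVertex G k c u

/-- The z-chromatic number: largest `k` admitting a z-coloring with `k` colors. -/
noncomputable def zNum (G : SimpleGraph V) : ℕ :=
  sSup {k | ∃ c : V → ℕ, IsZColoring G k c}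

/-- The b*-chromatic number: largest `k` admitting a b*-coloring with `k` colors. -/
noncomputable def bStar (G : SimpleGraph V) : ℕ :=
  sSup {k | ∃ c : V → ℕ, IsBStarColoring G k c}

/-- `m*(G)`: the largest `k` such that some vertex `u` has `k` distinct neighbors,
each of degree at least `k`. -/
noncomputable def mStar (G : SimpleGraph V) : ℕ :=
  sSup {k | ∃ (u : V) (s : Finset V), (↑s : Set V) ⊆ G.neighborSet u ∧ s.card = k ∧
    ∀ v ∈ s, k ≤ (G.neighborSet v).ncard}

/-- The clique number `ω(G)`. -/
noncomputable def omegaNum (G : SimpleGraph V) : ℕ :=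
  sSup {n | ∃ s : Finset V, G.IsNClique n s}
/-- The thin spider with clique `c_1,…,c_k` (the `Sum.inl` vertices), independent set
`s_1,…,s_k` (the `Sum.inr ∘ Sum.inl` vertices) where `s_i ~ c_j ↔ i = j`, and, when
`hasHead = true`, a head `c_0` (the `Sum.inr ∘ Sum.inr` vertex) adjacent exactly to
`c_1,…,c_k`. -/
def thinSpider (k : ℕ) (hasHead : Bool) :
    SimpleGraph (Fin k ⊕ (Fin k ⊕ Fin (cond hasHead 1 0))) :=
  SimpleGraph.fromRel fun x y =>
    match x, y with
    | Sum.inl _, Sum.inl _ => True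
    | Sum.inl i, Sum.inr (Sum.inl j) => i = j
    | Sum.inl _, Sum.inr (Sum.inr _) => True
    | _, _ => False

/-! Both numbers equal the size `k + [hasHead]` of the body `c_0, c_1, …, c_k`, which is a maximum
clique because a clique through a leg has at most two vertices. Coloring the body with all colors
gives a b*-coloring, since in a clique that receives every color each vertex is nice. Conversely,
a b-vertex of an `m`-coloring has at least `m - 1` neighbors; so if `m` exceeded the size of
the body, only the `c_i` with `i ≥ 1` could be b-vertices, and a nice vertex `c_i` would need
`m - 1 ≥ k` b-vertex neighbors among the `k - 1` other `c_j`. -/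

section Coloring

variable {G : SimpleGraph V} {m : ℕ} {c : V → ℕ}

theorem sub_one_le_card_of_forall_exists_mem {f : W → ℕ} {S : Finset W} (a : ℕ)
    (h : ∀ j ∈ Set.Icc 1 m, j ≠ a → ∃ w ∈ S, f w = j) : m - 1 ≤ S.card := by
  have hsub : (Finset.Icc 1 m).erase a ⊆ S.image f := by
    intro j hj
    obtain ⟨w, hw, rfl⟩ :=
      h j (by simpa using Finset.mem_of_mem_erase hj) (Finset.ne_of_mem_erase hj)
    exact Finset.mem_image_of_mem f hw
  calc m - 1 = (Finset.Icc 1 m).card - 1 := by simp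
    _ ≤ ((Finset.Icc 1 m).erase a).card := Finset.pred_card_le_card_erase
    _ ≤ (S.image f).card := Finset.card_le_card hsub
    _ ≤ S.card := Finset.card_image_le

theorem IsBVertex.sub_one_le_card {u : V} (hu : IsBVertex G m c u) {S : Finset V}
    (hS : ∀ w, G.Adj u w → w ∈ S) : m - 1 ≤ S.card :=
  sub_one_le_card_of_forall_exists_mem (c u) fun j hj hne =>
    let ⟨w, hadj, hw⟩ := hu j hj hne
    ⟨w, hS w hadj, hw⟩

theorem IsNiceVertex.sub_one_le_card {u : V} (hu : IsNiceVertex G m c u) {S : Finset V}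
    (hS : ∀ w, G.Adj u w → IsBVertex G m c w → w ∈ S) : m - 1 ≤ S.card :=
  sub_one_le_card_of_forall_exists_mem (c u) fun j hj hne =>
    let ⟨w, hadj, hw, hb⟩ := hu.2 j hj hne
    ⟨w, hS w hadj hb, hw⟩

theorem isBVertex_of_isClique {s : Set V} (hs : G.IsClique s) (hcover : Set.Icc 1 m ⊆ c '' s)
    {u : V} (hu : u ∈ s) : IsBVertex G m c u := by
  intro j hj hne
  obtain ⟨w, hw, rfl⟩ := hcover hj
  exact ⟨w, hs hu hw fun h => hne (h ▸ rfl), rfl⟩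

theorem isBStarColoring_of_isClique {s : Set V} (hm : m ≠ 0)
    (hrange : ∀ v, c v ∈ Set.Icc 1 m) (hproper : ∀ u v, G.Adj u v → c u ≠ c v)
    (hs : G.IsClique s) (hcover : Set.Icc 1 m ⊆ c '' s) : IsBStarColoring G m c := by
  refine ⟨⟨hrange, hproper, fun j hj => (hcover hj).imp fun _ => And.right⟩, ?_⟩
  obtain ⟨u, hu, hcu⟩ := hcover (Set.right_mem_Icc.mpr (Nat.one_le_iff_ne_zero.mpr hm))
  refine ⟨u, hcu, isBVertex_of_isClique hs hcover hu, fun j hj hne => ?_⟩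
  obtain ⟨w, hw, rfl⟩ := hcover hj
  exact ⟨w, hs hu hw fun h => hne (h ▸ rfl), rfl, isBVertex_of_isClique hs hcover hw⟩

end Coloring

namespace ThinSpider

variable {k : ℕ} {hasHead : Bool}

@[simp]
theorem adj_inl_inl {i j : Fin k} : (thinSpider k hasHead).Adj (.inl i) (.inl j) ↔ i ≠ j := by
  simp [thinSpider]

@[simp]
theorem adj_inl_leg {i t : Fin k} :
    (thinSpider k hasHead).Adj (.inl i) (.inr (.inl t)) ↔ i = t := by
  simp [thinSpider]

@[simp]
theorem adj_inl_head {i : Fin k} {t : Fin (cond hasHead 1 0)} :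
    (thinSpider k hasHead).Adj (.inl i) (.inr (.inr t)) := by
  simp [thinSpider]

@[simp]
theorem adj_head_inl {i : Fin k} {t : Fin (cond hasHead 1 0)} :
    (thinSpider k hasHead).Adj (.inr (.inr t)) (.inl i) :=
  adj_inl_head.symm

@[simp]
theorem not_adj_inr_inr {x y : Fin k ⊕ Fin (cond hasHead 1 0)} :
    ¬(thinSpider k hasHead).Adj (.inr x) (.inr y) := by
  simp [thinSpider]

theorem eq_of_adj_leg {t : Fin k} {v} (h : (thinSpider k hasHead).Adj (.inr (.inl t)) v) :
    v = .inl t := by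
  rcases v with i | y
  · simpa [eq_comm] using h.symm
  · exact absurd h not_adj_inr_inr

theorem exists_eq_inl_of_adj_inr {x : Fin k ⊕ Fin (cond hasHead 1 0)} {v}
    (h : (thinSpider k hasHead).Adj (.inr x) v) : ∃ i, v = .inl i := by
  rcases v with i | y
  · exact ⟨i, rfl⟩
  · exact absurd h not_adj_inr_inr

theorem cond_eq_one_of_head (t : Fin (cond hasHead 1 0)) : cond hasHead 1 0 = 1 := by
  cases hasHead
  · exact t.elim0
  · rfl

theorem head_eq (t s : Fin (cond hasHead 1 0)) : t = s :=
  Fin.ext (by have := t.isLt; have := s.isLt; have := cond_eq_one_of_head t; omega)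

/-- A b-vertex needs `m - 1` neighbors; a leg has one and the head has `k`. -/
theorem exists_eq_inl_of_isBVertex (hk : 2 ≤ k) {m : ℕ} {c} (hm : k + cond hasHead 1 0 < m)
    {w} (hw : IsBVertex (thinSpider k hasHead) m c w) : ∃ i, w = .inl i := by
  rcases w with i | t | t
  · exact ⟨i, rfl⟩
  · have := hw.sub_one_le_card (S := {.inl t}) fun v hv => by simp [eq_of_adj_leg hv]
    simp only [Finset.card_singleton] at this
    omega
  · have := hw.sub_one_le_card (S := Finset.univ.map .inl) fun v hv => by
      obtain ⟨i, rfl⟩ := exists_eq_inl_of_adj_inr hv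
      simp
    simp only [Finset.card_map, Finset.card_univ, Fintype.card_fin, cond_eq_one_of_head t]
      at this hm
    omega

theorem le_of_isBStarColoring (hk : 2 ≤ k) {m : ℕ} {c}
    (hc : IsBStarColoring (thinSpider k hasHead) m c) : m ≤ k + cond hasHead 1 0 := by
  by_contra! hm
  obtain ⟨-, u, -, hu⟩ := hc
  obtain ⟨i, rfl⟩ := exists_eq_inl_of_isBVertex hk hm hu.1
  have := hu.sub_one_le_card (S := (Finset.univ.erase i).map .inl) fun w hw hb => by
    obtain ⟨j, rfl⟩ := exists_eq_inl_of_isBVertex hk hm hb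
    simpa [eq_comm] using hw
  simp only [Finset.card_map, Finset.card_erase_of_mem (Finset.mem_univ i), Finset.card_univ,
    Fintype.card_fin] at this
  omega

def legs (k : ℕ) (hasHead : Bool) : Finset (Fin k ⊕ (Fin k ⊕ Fin (cond hasHead 1 0))) :=
  Finset.univ.map (Function.Embedding.inl.trans Function.Embedding.inr)

/-- The clique `c_0, c_1, …, c_k` (with `c_0` only if there is a head). -/
def body (k : ℕ) (hasHead : Bool) : Finset (Fin k ⊕ (Fin k ⊕ Fin (cond hasHead 1 0))) :=
  (legs k hasHead)ᶜ

theorem card_body : (body k hasHead).card = k + cond hasHead 1 0 := by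
  simp [body, legs, Finset.card_compl]

theorem isClique_body : (thinSpider k hasHead).IsClique (body k hasHead : Set _) := by
  rintro (i | t | t) hv (j | s | s) hw hne <;>
    first | exact (hne (by rw [head_eq t s])).elim | simp_all [body, legs]

theorem isNClique_body : (thinSpider k hasHead).IsNClique (k + cond hasHead 1 0) (body k hasHead) :=
  ⟨isClique_body, card_body⟩

/-- A clique through a leg `s_t` lies in the edge `s_t c_t`; any other clique lies in the body. -/
theorem le_of_isNClique (hk : 2 ≤ k) {n : ℕ} {s} (hs : (thinSpider k hasHead).IsNClique n s) :
    n ≤ k + cond hasHead 1 0 := by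
  rw [← hs.card_eq]
  by_cases hleg : ∃ t, .inr (.inl t) ∈ s
  · obtain ⟨t, ht⟩ := hleg
    have hsub : s ⊆ {.inr (.inl t), .inl t} := fun v hv => by
      by_cases hvt : v = .inr (.inl t)
      · simp [hvt]
      · simp [eq_of_adj_leg (hs.isClique ht hv (Ne.symm hvt))]
    have := (Finset.card_le_card hsub).trans (Finset.card_le_two)
    omega
  · push Not at hleg
    refine card_body (hasHead := hasHead) ▸ Finset.card_le_card fun v hv => ?_
    rcases v with i | t | t
    all_goals simp_all [body, legs]

def coloring (k : ℕ) (hasHead : Bool) : Fin k ⊕ (Fin k ⊕ Fin (cond hasHead 1 0)) → ℕ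
  | .inl i => i + 1
  | .inr (.inl t) => if (t : ℕ) = 0 then 2 else 1
  | .inr (.inr _) => k + 1

theorem coloring_mem_Icc (hk : 2 ≤ k) (v : Fin k ⊕ (Fin k ⊕ Fin (cond hasHead 1 0))) :
    coloring k hasHead v ∈ Set.Icc 1 (k + cond hasHead 1 0) := by
  rcases v with i | t | t
  · simp only [coloring, Set.mem_Icc]; omega
  · simp only [coloring, Set.mem_Icc]; split <;> omega
  · simp only [coloring, Set.mem_Icc, cond_eq_one_of_head t]; omega

theorem coloring_ne_of_adj {v w : Fin k ⊕ (Fin k ⊕ Fin (cond hasHead 1 0))}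
    (h : (thinSpider k hasHead).Adj v w) : coloring k hasHead v ≠ coloring k hasHead w := by
  suffices key : ∀ i w, (thinSpider k hasHead).Adj (.inl i) w →
      coloring k hasHead (.inl i) ≠ coloring k hasHead w by
    rcases v with i | x
    · exact key i w h
    · obtain ⟨i, rfl⟩ := exists_eq_inl_of_adj_inr h
      exact (key i _ h.symm).symm
  rintro i (j | t | t) h
  · simpa [coloring, Fin.val_inj] using h
  · obtain rfl : i = t := adj_inl_leg.mp h
    simp only [coloring]
    split <;> omega
  · simp only [coloring]
    omega

theorem Icc_subset_image_coloring_body :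
    Set.Icc 1 (k + cond hasHead 1 0) ⊆ coloring k hasHead '' ↑(body k hasHead) := by
  rintro j ⟨hj1, hj⟩
  by_cases hjk : j ≤ k
  · exact ⟨.inl ⟨j - 1, by omega⟩, by simp [body, legs], by simp only [coloring]; omega⟩
  · cases hasHead
    · simp only [cond_false] at hj
      omega
    · refine ⟨.inr (.inr ⟨0, Nat.one_pos⟩), by simp [body, legs], ?_⟩
      simp only [cond_true] at hj
      show k + 1 = j
      omega

theorem isBStarColoring_coloring (hk : 2 ≤ k) :
    IsBStarColoring (thinSpider k hasHead) (k + cond hasHead 1 0) (coloring k hasHead) :=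
  isBStarColoring_of_isClique (by omega) (coloring_mem_Icc hk) (fun _ _ => coloring_ne_of_adj)
    isClique_body Icc_subset_image_coloring_body

end ThinSpider

theorem thinSpider_bStar_eq_omega (k : ℕ) (hk : 2 ≤ k) (hasHead : Bool) :
    bStar (thinSpider k hasHead) = omegaNum (thinSpider k hasHead) := by
  have hbStar : IsGreatest {m | ∃ c, IsBStarColoring (thinSpider k hasHead) m c}
      (k + cond hasHead 1 0) :=
    ⟨⟨_, ThinSpider.isBStarColoring_coloring hk⟩,
      fun _ ⟨_, hc⟩ => ThinSpider.le_of_isBStarColoring hk hc⟩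
  have hω : IsGreatest {n | ∃ s, (thinSpider k hasHead).IsNClique n s} (k + cond hasHead 1 0) :=
    ⟨⟨_, ThinSpider.isNClique_body⟩, fun _ ⟨_, hs⟩ => ThinSpider.le_of_isNClique hk hs⟩
  rw [bStar, omegaNum, hbStar.csSup_eq, hω.csSup_eq]
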